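/- arXiv:2109.09106 — 3 statements merged into one kernel-verified Lean document; each statement's English description precedes it below -/
import Mathlib

section
/- Let 1 < p < ∞ and β > 1. For each n ∈ ℕ define the probability measure μ_n = Σ_{k=0}^{n-1} [λ₁^{(k)} δ_{(0, β^{k(p-1)})} + λ₂^{(k)} δ_{(β^{k+1}, 0)}] + γ^{(n)} δ_{(β^n, β^{n(p-1)})} on ℝ², where λ₁^{(k)} = (1 - 1/β) β^{-kp}, λ₂^{(k)} = (1/β)(1 - 1/β^{p-1}) β^{-kp}, and γ^{(n)} = β^{-np}. Then μ_n is a probability measure (the weights are nonnegative and sum to 1) and its barycenter is (1,1). -/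
open MeasureTheory

private lemma geomtel (x : ℝ) (n : ℕ) :
    (∑ k ∈ Finset.range n, (1 - x) * x ^ k) + x ^ n = 1 := by
  induction n with
  | zero => simp
  | succ m ih =>
    rw [Finset.sum_range_succ]
    linear_combination ih

private lemma integrable_dirac'' {α E : Type*} [MeasurableSpace α]
    [MeasurableSingletonClass α] [NormedAddCommGroup E] (f : α → E) (a : α) :
    Integrable f (Measure.dirac a) := by
  refine (integrable_const (f a)).congr ?_
  rw [Filter.EventuallyEq, MeasureTheory.ae_dirac_eq]
  exact Filter.eventually_pure.2 rfl

theorem staircase_laminate_probability_and_barycenter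
    (p β : ℝ) (hp : 1 < p) (hβ : 1 < β) (n : ℕ)
    (lam1 : ℕ → ℝ) (lam2 : ℕ → ℝ) (gam : ℕ → ℝ)
    (hlam1 : ∀ k, lam1 k = (1 - 1/β) * β ^ (-(k:ℝ)*p))
    (hlam2 : ∀ k, lam2 k = (1/β) * (1 - 1/β^(p-1)) * β ^ (-(k:ℝ)*p))
    (hgam : ∀ m, gam m = β ^ (-(m:ℝ)*p))
    (μ : Measure (ℝ × ℝ))
    (hμ : μ = (∑ k ∈ Finset.range n,
        (ENNReal.ofReal (lam1 k) • Measure.dirac ((0 : ℝ), β ^ ((k:ℝ)*(p-1)))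
          + ENNReal.ofReal (lam2 k) • Measure.dirac (β ^ ((k:ℝ)+1), (0:ℝ))))
        + ENNReal.ofReal (gam n) • Measure.dirac (β ^ (n:ℝ), β ^ ((n:ℝ)*(p-1)))) :
    (∀ k, 0 ≤ lam1 k ∧ 0 ≤ lam2 k ∧ 0 ≤ gam k) ∧
    IsProbabilityMeasure μ ∧
    (∫ z, z ∂μ) = ((1 : ℝ), (1 : ℝ)) := by
  have hβ0 : (0:ℝ) < β := lt_trans one_pos hβ
  have hβne : β ≠ 0 := ne_of_gt hβ0
  set s : ℝ := β ^ (p - 1) with hs_def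
  have hs0 : 0 < s := Real.rpow_pos_of_pos hβ0 _
  have hs1 : 1 ≤ s := Real.one_le_rpow hβ.le (by linarith)
  have hsne : s ≠ 0 := ne_of_gt hs0
  -- basic rpow conversions
  have hβp : β ^ p = β * s := by
    have h : β * s = β ^ (1:ℝ) * β ^ (p-1) := by rw [Real.rpow_one]
    rw [h, ← Real.rpow_add hβ0]
    norm_num
  have ht_eq : β ^ (-p) = (β * s)⁻¹ := by
    rw [← hβp, ← Real.rpow_neg hβ0.le]
  have h1 : ∀ k : ℕ, β ^ (-(k:ℝ)*p) = ((β * s)⁻¹) ^ k := by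
    intro k
    rw [show -(k:ℝ)*p = (-p) * (k:ℝ) by ring, Real.rpow_mul hβ0.le,
      Real.rpow_natCast, ht_eq]
  have h2 : ∀ k : ℕ, β ^ ((k:ℝ)*(p-1)) = s ^ k := by
    intro k
    rw [show (k:ℝ)*(p-1) = (p-1) * (k:ℝ) by ring, Real.rpow_mul hβ0.le,
      Real.rpow_natCast]
  have h3 : ∀ k : ℕ, β ^ ((k:ℝ)+1) = β ^ k * β := by
    intro k
    rw [Real.rpow_add hβ0, Real.rpow_one, Real.rpow_natCast]
  have h4 : β ^ (n:ℝ) = β ^ n := Real.rpow_natCast β n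
  -- nonnegativity
  have hβinv : 1/β ≤ 1 := by rw [div_le_one hβ0]; exact hβ.le
  have hsinv : 1/s ≤ 1 := by rw [div_le_one hs0]; exact hs1
  have hnn : ∀ k, 0 ≤ lam1 k ∧ 0 ≤ lam2 k ∧ 0 ≤ gam k := by
    intro k
    refine ⟨?_, ?_, ?_⟩
    · rw [hlam1]
      exact mul_nonneg (by linarith) (Real.rpow_pos_of_pos hβ0 _).le
    · rw [hlam2]
      exact mul_nonneg (mul_nonneg (by positivity) (by linarith))
        (Real.rpow_pos_of_pos hβ0 _).le
    · rw [hgam]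
      exact (Real.rpow_pos_of_pos hβ0 _).le
  -- key real identities
  have key1 : ∀ k : ℕ, lam1 k + lam2 k = (1 - (β*s)⁻¹) * ((β*s)⁻¹) ^ k := by
    intro k
    rw [hlam1, hlam2, h1 k]
    field_simp
    ring
  have keyg : gam n = ((β*s)⁻¹) ^ n := by rw [hgam, h1]
  have prob : (∑ k ∈ Finset.range n, (lam1 k + lam2 k)) + gam n = 1 := by
    rw [keyg, Finset.sum_congr rfl (fun k _ => key1 k)]
    exact geomtel _ n
  have key2 : ∀ k : ℕ, lam2 k * β ^ ((k:ℝ)+1) = (1 - s⁻¹) * (s⁻¹) ^ k := by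
    intro k
    rw [hlam2, h1 k, h3 k]
    have hmul : ((β*s)⁻¹) ^ k * β ^ k = (s⁻¹) ^ k := by
      rw [← mul_pow]
      congr 1
      field_simp
      try ring
    calc 1/β * (1 - 1/s) * ((β*s)⁻¹) ^ k * (β ^ k * β)
        = (1 - 1/s) * (((β*s)⁻¹) ^ k * β ^ k) * (1/β * β) := by ring
      _ = (1 - s⁻¹) * (s⁻¹) ^ k := by
          rw [hmul, one_div_mul_cancel hβne, mul_one, one_div]
  have keyg2 : gam n * β ^ (n:ℝ) = (s⁻¹) ^ n := by
    rw [hgam, h1, h4, ← mul_pow]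
    congr 1
    field_simp
    try ring
  have key3 : ∀ k : ℕ, lam1 k * β ^ ((k:ℝ)*(p-1)) = (1 - β⁻¹) * (β⁻¹) ^ k := by
    intro k
    rw [hlam1, h1 k, h2 k]
    have : ((β*s)⁻¹) ^ k * s ^ k = (β⁻¹) ^ k := by
      rw [← mul_pow]
      congr 1
      field_simp
      try ring
    calc (1 - 1/β) * ((β*s)⁻¹) ^ k * s ^ k
        = (1 - 1/β) * (((β*s)⁻¹) ^ k * s ^ k) := by ring
      _ = (1 - β⁻¹) * (β⁻¹) ^ k := by rw [this, one_div]
  have keyg3 : gam n * β ^ ((n:ℝ)*(p-1)) = (β⁻¹) ^ n := by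
    rw [hgam, h1, h2, ← mul_pow]
    congr 1
    field_simp
    try ring
  -- integrability helpers
  have hint_s : ∀ (c : ℝ) (a : ℝ × ℝ),
      Integrable (fun z : ℝ × ℝ => z) (ENNReal.ofReal c • Measure.dirac a) :=
    fun c a => (integrable_dirac'' _ a).smul_measure ENNReal.ofReal_ne_top
  refine ⟨hnn, ?_, ?_⟩
  · -- probability measure
    constructor
    rw [hμ]
    simp only [Measure.add_apply, Measure.finset_sum_apply, Measure.smul_apply,
      smul_eq_mul, Measure.dirac_apply_of_mem (Set.mem_univ _), mul_one]
    rw [← ENNReal.ofReal_one, ← prob, ENNReal.ofReal_add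
      (Finset.sum_nonneg (fun k _ => by linarith [(hnn k).1, (hnn k).2.1]))
      (hnn n).2.2, ENNReal.ofReal_sum_of_nonneg
      (fun k _ => by linarith [(hnn k).1, (hnn k).2.1])]
    congr 1
    exact Finset.sum_congr rfl fun k _ =>
      (ENNReal.ofReal_add (hnn k).1 (hnn k).2.1).symm
  · -- barycenter
    have hterm : ∀ (c c' : ℝ) (a b : ℝ × ℝ), 0 ≤ c → 0 ≤ c' →
        ∫ z, z ∂(ENNReal.ofReal c • Measure.dirac a
          + ENNReal.ofReal c' • Measure.dirac b) = c • a + c' • b := by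
      intro c c' a b hc hc'
      rw [integral_add_measure (hint_s _ _) (hint_s _ _), integral_smul_measure,
        integral_smul_measure, integral_dirac, integral_dirac,
        ENNReal.toReal_ofReal hc, ENNReal.toReal_ofReal hc']
    rw [hμ, integral_add_measure
      (integrable_finset_sum_measure.2 fun i _ => (hint_s _ _).add_measure (hint_s _ _))
      (hint_s _ _),
      integral_finset_sum_measure (fun i _ => (hint_s _ _).add_measure (hint_s _ _)),
      integral_smul_measure, integral_dirac, ENNReal.toReal_ofReal (hnn n).2.2,
      Finset.sum_congr rfl (fun k _ => hterm _ _ _ _ (hnn k).1 (hnn k).2.1)]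
    apply Prod.ext
    · simp only [Prod.fst_add, Prod.fst_sum, Prod.smul_fst, smul_eq_mul,
        mul_zero, zero_add, add_zero]
      rw [keyg2, Finset.sum_congr rfl (fun k _ => key2 k)]
      exact geomtel _ n
    · simp only [Prod.snd_add, Prod.snd_sum, Prod.smul_snd, smul_eq_mul,
        mul_zero, zero_add, add_zero]
      rw [keyg3, Finset.sum_congr rfl (fun k _ => key3 k)]
      exact geomtel _ n
end

section
/- Let 1 < p < ∞, β > 1, and B₀, E₀ ∈ ℝ³ be arbitrary. For each n ∈ ℕ, the measure ν_n = Σ_{k=0}^{n-1} [λ₁^{(k)} δ_{(0, β^{k(p-1)} E₀)} + λ₂^{(k)} δ_{(β^{k+1} B₀, 0)}] + γ^{(n)} δ_{(β^n B₀, β^{n(p-1)} E₀)}, with λ₁^{(k)} = (1-1/β)β^{-kp}, λ₂^{(k)} = (1/β)(1-1/β^{p-1})β^{-kp}, γ^{(n)} = β^{-np}, is a probability measure on ℝ³ × ℝ³ with barycenter (B₀, E₀), and every point in its support (B, E) satisfies B ∈ span{B₀} and E ∈ span{E₀}. -/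
open MeasureTheory

section helpers
variable {p β : ℝ}

lemma stair_tele (β c : ℝ) (n : ℕ) :
    ∑ k ∈ Finset.range n, (β ^ (-(k:ℝ)*c) - β ^ (-((k:ℝ)+1)*c)) = 1 - β ^ (-(n:ℝ)*c) := by
  have h := Finset.sum_range_sub' (f := fun k : ℕ => β ^ (-(k:ℝ)*c)) n
  push_cast at h
  simpa [Real.rpow_zero] using h

lemma idA (hβ : 1 < β) (k : ℕ) :
    (1 - 1/β) * β ^ (-(k:ℝ)*p) + (1/β) * (1 - 1/β^(p-1)) * β ^ (-(k:ℝ)*p)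
      = β ^ (-(k:ℝ)*p) - β ^ (-((k:ℝ)+1)*p) := by
  have hb : (0:ℝ) < β := lt_trans one_pos hβ
  have e : ∀ a b : ℝ, β ^ (a+b) = β ^ a * β ^ b := fun a b => Real.rpow_add hb a b
  have hQ : (0:ℝ) < β ^ (p-1) := Real.rpow_pos_of_pos hb _
  have hp2 : β ^ p = β * β ^ (p-1) := by
    have h := e 1 (p-1); rw [Real.rpow_one] at h
    rw [← h]; congr 1; ring
  have l1 : β ^ (-((k:ℝ)+1)*p) = β ^ (-(k:ℝ)*p) * (β ^ p)⁻¹ := by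
    rw [← Real.rpow_neg hb.le p, ← e]; congr 1; ring
  rw [l1, hp2]
  field_simp
  ring

lemma idB (hβ : 1 < β) (k : ℕ) :
    (1/β) * (1 - 1/β^(p-1)) * β ^ (-(k:ℝ)*p) * β ^ ((k:ℝ)+1)
      = β ^ (-(k:ℝ)*(p-1)) - β ^ (-((k:ℝ)+1)*(p-1)) := by
  have hb : (0:ℝ) < β := lt_trans one_pos hβ
  have e : ∀ a b : ℝ, β ^ (a+b) = β ^ a * β ^ b := fun a b => Real.rpow_add hb a b
  have hQ : (0:ℝ) < β ^ (p-1) := Real.rpow_pos_of_pos hb _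
  have l1 : β ^ (-(k:ℝ)*p) * β ^ ((k:ℝ)+1) = β ^ (-(k:ℝ)*(p-1)) * β := by
    have h := e (-(k:ℝ)*(p-1)) 1; rw [Real.rpow_one] at h
    rw [← e, ← h]; congr 1; ring
  have l2 : β ^ (-((k:ℝ)+1)*(p-1)) = β ^ (-(k:ℝ)*(p-1)) * (β ^ (p-1))⁻¹ := by
    rw [← Real.rpow_neg hb.le (p-1), ← e]; congr 1; ring
  rw [mul_assoc, l1, l2]
  field_simp

lemma idC (hβ : 1 < β) (k : ℕ) :
    (1 - 1/β) * β ^ (-(k:ℝ)*p) * β ^ ((k:ℝ)*(p-1))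
      = β ^ (-(k:ℝ)*1) - β ^ (-((k:ℝ)+1)*1) := by
  have hb : (0:ℝ) < β := lt_trans one_pos hβ
  have e : ∀ a b : ℝ, β ^ (a+b) = β ^ a * β ^ b := fun a b => Real.rpow_add hb a b
  have l1 : β ^ (-(k:ℝ)*p) * β ^ ((k:ℝ)*(p-1)) = β ^ (-(k:ℝ)*1) := by
    rw [← e]; congr 1; ring
  have l2 : β ^ (-((k:ℝ)+1)*1) = β ^ (-(k:ℝ)*1) * β⁻¹ := by
    have h := e (-(k:ℝ)*1) (-1); rw [Real.rpow_neg_one] at h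
    rw [← h]; congr 1; ring
  rw [mul_assoc, l1, l2]
  field_simp

lemma idG1 (hβ : 1 < β) (n : ℕ) :
    β ^ (-(n:ℝ)*p) * β ^ (n:ℝ) = β ^ (-(n:ℝ)*(p-1)) := by
  have hb : (0:ℝ) < β := lt_trans one_pos hβ
  rw [← Real.rpow_add hb]; congr 1; ring

lemma idG2 (hβ : 1 < β) (n : ℕ) :
    β ^ (-(n:ℝ)*p) * β ^ ((n:ℝ)*(p-1)) = β ^ (-(n:ℝ)*1) := by
  have hb : (0:ℝ) < β := lt_trans one_pos hβ
  rw [← Real.rpow_add hb]; congr 1; ring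

end helpers

abbrev E3 := EuclideanSpace ℝ (Fin 3)

lemma int_dirac_id (a : E3 × E3) : Integrable (fun z => z) (Measure.dirac a) := by
  have h1 : Integrable (fun _ : E3 × E3 => a) (Measure.dirac a) := integrable_const a
  have h2 : (fun z : E3 × E3 => z) =ᵐ[Measure.dirac a] (fun _ => a) := ae_eq_dirac _
  exact h1.congr h2.symm

lemma int_smul_dirac_id (c : ℝ) (a : E3 × E3) :
    Integrable (fun z => z) (ENNReal.ofReal c • Measure.dirac a) :=
  (int_dirac_id a).smul_measure ENNReal.ofReal_ne_top

lemma integral_smul_dirac_id {c : ℝ} (hc : 0 ≤ c) (a : E3 × E3) :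
    (∫ z, z ∂(ENNReal.ofReal c • Measure.dirac a)) = c • a := by
  rw [integral_smul_measure, integral_dirac, ENNReal.toReal_ofReal hc]

theorem embedded_staircase_laminate
    (p β : ℝ) (hp : 1 < p) (hβ : 1 < β)
    (B₀ E₀ : EuclideanSpace ℝ (Fin 3)) (n : ℕ)
    (lam1 : ℕ → ℝ) (lam2 : ℕ → ℝ) (gam : ℕ → ℝ)
    (hlam1 : ∀ k, lam1 k = (1 - 1/β) * β ^ (-(k:ℝ)*p))
    (hlam2 : ∀ k, lam2 k = (1/β) * (1 - 1/β^(p-1)) * β ^ (-(k:ℝ)*p))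
    (hgam : ∀ m, gam m = β ^ (-(m:ℝ)*p))
    (ν : Measure (EuclideanSpace ℝ (Fin 3) × EuclideanSpace ℝ (Fin 3)))
    (hν : ν = (∑ k ∈ Finset.range n,
        (ENNReal.ofReal (lam1 k) • Measure.dirac ((0 : EuclideanSpace ℝ (Fin 3)),
            (β ^ ((k:ℝ)*(p-1))) • E₀)
          + ENNReal.ofReal (lam2 k) • Measure.dirac ((β ^ ((k:ℝ)+1)) • B₀,
            (0 : EuclideanSpace ℝ (Fin 3)))))
        + ENNReal.ofReal (gam n) • Measure.dirac ((β ^ (n:ℝ)) • B₀, (β ^ ((n:ℝ)*(p-1))) • E₀)) :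
    IsProbabilityMeasure ν ∧
    (∫ z, z ∂ν) = (B₀, E₀) ∧
    ν {z : EuclideanSpace ℝ (Fin 3) × EuclideanSpace ℝ (Fin 3) |
        z.1 ∉ Submodule.span ℝ {B₀} ∨ z.2 ∉ Submodule.span ℝ {E₀}} = 0 := by
  have hb : (0:ℝ) < β := lt_trans one_pos hβ
  have hb1 : (1:ℝ)/β ≤ 1 := by rw [div_le_one hb]; linarith
  have hQ1 : (1:ℝ) ≤ β ^ (p-1) := Real.one_le_rpow hβ.le (by linarith)
  have hQ1' : (1:ℝ)/β^(p-1) ≤ 1 := by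
    rw [div_le_one (lt_of_lt_of_le one_pos hQ1)]; exact hQ1
  have h1n : ∀ k, 0 ≤ lam1 k := fun k => by
    rw [hlam1]
    exact mul_nonneg (by linarith) (Real.rpow_pos_of_pos hb _).le
  have h2n : ∀ k, 0 ≤ lam2 k := fun k => by
    rw [hlam2]
    exact mul_nonneg (mul_nonneg (by positivity) (by linarith))
      (Real.rpow_pos_of_pos hb _).le
  have hgn : ∀ m, 0 ≤ gam m := fun m => by
    rw [hgam]; exact (Real.rpow_pos_of_pos hb _).le
  -- scalar sums
  have hone : (∑ k ∈ Finset.range n, (lam1 k + lam2 k)) + gam n = 1 := by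
    have t := stair_tele β p n
    have hc : ∑ k ∈ Finset.range n, (lam1 k + lam2 k)
        = ∑ k ∈ Finset.range n, (β ^ (-(k:ℝ)*p) - β ^ (-((k:ℝ)+1)*p)) :=
      Finset.sum_congr rfl (fun k _ => by rw [hlam1, hlam2]; exact idA hβ k)
    rw [hc, t, hgam]; ring
  have s1 : (∑ k ∈ Finset.range n, lam2 k * β ^ ((k:ℝ)+1)) + gam n * β ^ (n:ℝ) = 1 := by
    have t := stair_tele β (p-1) n
    have hc : ∑ k ∈ Finset.range n, lam2 k * β ^ ((k:ℝ)+1)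
        = ∑ k ∈ Finset.range n, (β ^ (-(k:ℝ)*(p-1)) - β ^ (-((k:ℝ)+1)*(p-1))) :=
      Finset.sum_congr rfl (fun k _ => by rw [hlam2]; exact idB hβ k)
    rw [hc, t, hgam, idG1 hβ]; ring
  have s2 : (∑ k ∈ Finset.range n, lam1 k * β ^ ((k:ℝ)*(p-1)))
      + gam n * β ^ ((n:ℝ)*(p-1)) = 1 := by
    have t := stair_tele β 1 n
    have hc : ∑ k ∈ Finset.range n, lam1 k * β ^ ((k:ℝ)*(p-1))
        = ∑ k ∈ Finset.range n, (β ^ (-(k:ℝ)*1) - β ^ (-((k:ℝ)+1)*1)) :=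
      Finset.sum_congr rfl (fun k _ => by rw [hlam1]; exact idC hβ k)
    rw [hc, t, hgam, idG2 hβ]; ring
  subst hν
  refine ⟨⟨?_⟩, ?_, ?_⟩
  · -- probability measure
    simp only [Measure.add_apply, Measure.finset_sum_apply, Measure.smul_apply,
      measure_univ, smul_eq_mul, mul_one]
    have hc : ∀ k ∈ Finset.range n,
        ENNReal.ofReal (lam1 k) + ENNReal.ofReal (lam2 k)
          = ENNReal.ofReal (lam1 k + lam2 k) :=
      fun k _ => (ENNReal.ofReal_add (h1n k) (h2n k)).symm
    rw [Finset.sum_congr rfl hc,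
      ← ENNReal.ofReal_sum_of_nonneg (fun k _ => add_nonneg (h1n k) (h2n k)),
      ← ENNReal.ofReal_add (Finset.sum_nonneg fun k _ => add_nonneg (h1n k) (h2n k)) (hgn n),
      hone, ENNReal.ofReal_one]
  · -- barycenter
    have hIμ : ∀ k ∈ Finset.range n, Integrable (fun z : E3 × E3 => z)
        (ENNReal.ofReal (lam1 k) • Measure.dirac ((0 : E3), (β ^ ((k:ℝ)*(p-1))) • E₀)
          + ENNReal.ofReal (lam2 k) • Measure.dirac ((β ^ ((k:ℝ)+1)) • B₀, (0 : E3))) :=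
      fun k _ => (int_smul_dirac_id _ _).add_measure (int_smul_dirac_id _ _)
    rw [integral_add_measure (integrable_finset_sum_measure.2 hIμ) (int_smul_dirac_id _ _),
      integral_finset_sum_measure hIμ]
    have hterm : ∀ k ∈ Finset.range n,
        (∫ z : E3 × E3, z ∂(ENNReal.ofReal (lam1 k) • Measure.dirac ((0 : E3), (β ^ ((k:ℝ)*(p-1))) • E₀)
          + ENNReal.ofReal (lam2 k) • Measure.dirac ((β ^ ((k:ℝ)+1)) • B₀, (0 : E3))))
        = lam1 k • ((0 : E3), (β ^ ((k:ℝ)*(p-1))) • E₀)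
          + lam2 k • ((β ^ ((k:ℝ)+1)) • B₀, (0 : E3)) := fun k _ => by
      rw [integral_add_measure (int_smul_dirac_id _ _) (int_smul_dirac_id _ _),
        integral_smul_dirac_id (h1n k), integral_smul_dirac_id (h2n k)]
    rw [Finset.sum_congr rfl hterm, integral_smul_dirac_id (hgn n)]
    refine Prod.ext ?_ ?_
    · simp only [Prod.fst_add, Prod.fst_sum, Prod.smul_fst, smul_zero, zero_add, smul_smul,
        ← Finset.sum_smul, ← add_smul, s1, one_smul]
    · simp only [Prod.snd_add, Prod.snd_sum, Prod.smul_snd, smul_zero, add_zero, smul_smul,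
        ← Finset.sum_smul, ← add_smul, s2, one_smul]
  · -- support
    set S : Set (E3 × E3) := {z : E3 × E3 |
        z.1 ∉ Submodule.span ℝ {B₀} ∨ z.2 ∉ Submodule.span ℝ {E₀}} with hSdef
    have hSm : MeasurableSet S := by
      have hB : MeasurableSet ((Submodule.span ℝ {B₀} : Submodule ℝ E3) : Set E3) :=
        (Submodule.closed_of_finiteDimensional _).measurableSet
      have hE : MeasurableSet ((Submodule.span ℝ {E₀} : Submodule ℝ E3) : Set E3) :=
        (Submodule.closed_of_finiteDimensional _).measurableSet
      have : S = ((Prod.fst ⁻¹' (Submodule.span ℝ {B₀} : Submodule ℝ E3))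
          ∩ (Prod.snd ⁻¹' (Submodule.span ℝ {E₀} : Submodule ℝ E3)))ᶜ := by
        ext z
        simp [S, Set.mem_setOf_eq, not_and_or, or_comm]
        tauto
      rw [this]
      exact ((measurable_fst hB).inter (measurable_snd hE)).compl
    have hdirac : ∀ a : E3 × E3, a ∉ S → Measure.dirac a S = 0 := fun a ha => by
      rw [Measure.dirac_apply' a hSm, Set.indicator_of_notMem ha]
    have hmem : ∀ (c d : ℝ), ((c • B₀, d • E₀) : E3 × E3) ∉ S := by
      intro c d
      simp only [S, Set.mem_setOf_eq, not_or, not_not]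
      exact ⟨Submodule.smul_mem _ _ (Submodule.mem_span_singleton_self _),
        Submodule.smul_mem _ _ (Submodule.mem_span_singleton_self _)⟩
    have hmem1 : ∀ d : ℝ, (((0 : E3), d • E₀) : E3 × E3) ∉ S := by
      intro d
      have := hmem 0 d
      simpa using this
    have hmem2 : ∀ c : ℝ, ((c • B₀, (0 : E3)) : E3 × E3) ∉ S := by
      intro c
      have := hmem c 0
      simpa using this
    simp only [Measure.add_apply, Measure.finset_sum_apply, Measure.smul_apply,
      hdirac _ (hmem _ _), hdirac _ (hmem1 _), hdirac _ (hmem2 _),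
      smul_eq_mul, mul_zero, add_zero, Finset.sum_const_zero]
end

section
/- Let Ω ⊆ 𝕋³ be open, let φ, ψ be smooth functions on 𝕋³ and φ̄, ψ̄ affine functions with supp(φ − φ̄, ψ − ψ̄) ⊂ Ω. Set B = ∇φ × ∇ψ, B̄ = ∇φ̄ × ∇ψ̄, A = φ∇ψ, Ā = φ̄∇ψ̄. Then ∫_{𝕋³} (A·B − Ā·B̄) dx = ∫_Ω (φ∇ψ − φ̄∇ψ̄)·(∇φ × ∇ψ + ∇φ̄ × ∇ψ̄) dx = 0. -/
open Matrix MeasureTheory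

/-- Partial derivative in the `i`-th coordinate direction. -/
noncomputable def pd (i : Fin 3) (f : (Fin 3 → ℝ) → ℝ) (x : Fin 3 → ℝ) : ℝ :=
  fderiv ℝ f x (Pi.single i 1)

/-- Gradient of a scalar function on ℝ³. -/
noncomputable def grad3 (f : (Fin 3 → ℝ) → ℝ) (x : Fin 3 → ℝ) : Fin 3 → ℝ :=
  fun i => pd i f x

/-- The fundamental domain `(0,1)³` of the 3-torus `𝕋³ = ℝ³/ℤ³`. -/
def unitBox : Set (Fin 3 → ℝ) := Set.univ.pi fun _ => Set.Ioo (0:ℝ) 1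

section Aux

variable {f g : (Fin 3 → ℝ) → ℝ} {x : Fin 3 → ℝ} {i j : Fin 3}

@[fun_prop]
lemma contDiff_pd (i : Fin 3) (hf : ContDiff ℝ (⊤ : ℕ∞) f) : ContDiff ℝ (⊤ : ℕ∞) (fun y => pd i f y) := by
  unfold pd
  exact (hf.fderiv_right (by simp)).clm_apply contDiff_const

@[fun_prop]
lemma continuous_pd (i : Fin 3) (hf : ContDiff ℝ (⊤ : ℕ∞) f) : Continuous (fun y => pd i f y) := by
  unfold pd
  exact ((hf.fderiv_right (m := (⊤ : ℕ∞)) (by simp)).clm_apply contDiff_const).continuous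

lemma pd_mul (hf : ContDiff ℝ (⊤ : ℕ∞) f) (hg : ContDiff ℝ (⊤ : ℕ∞) g) :
    pd i (fun y => f y * g y) x = f x * pd i g x + pd i f x * g x := by
  unfold pd
  rw [fderiv_fun_mul (hf.differentiable (by simp) x) (hg.differentiable (by simp) x)]
  simp; ring

lemma pd_sub (hf : ContDiff ℝ (⊤ : ℕ∞) f) (hg : ContDiff ℝ (⊤ : ℕ∞) g) :
    pd i (fun y => f y - g y) x = pd i f x - pd i g x := by
  unfold pd
  rw [fderiv_fun_sub (hf.differentiable (by simp) x) (hg.differentiable (by simp) x)]; simp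

lemma pd_add (hf : ContDiff ℝ (⊤ : ℕ∞) f) (hg : ContDiff ℝ (⊤ : ℕ∞) g) :
    pd i (fun y => f y + g y) x = pd i f x + pd i g x := by
  unfold pd
  rw [fderiv_fun_add (hf.differentiable (by simp) x) (hg.differentiable (by simp) x)]; simp

lemma pd_const (c : ℝ) : pd i (fun _ => c) x = 0 := by
  unfold pd; simp

lemma pd_coord (j : Fin 3) : pd i (fun y => y j) x = if j = i then 1 else 0 := by
  unfold pd
  have : (fun y : Fin 3 → ℝ => y j) = (ContinuousLinearMap.proj j : (Fin 3 → ℝ) →L[ℝ] ℝ) := rfl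
  rw [this, ContinuousLinearMap.fderiv]
  simp [Pi.single_apply]

lemma pd_comm (hf : ContDiff ℝ (⊤ : ℕ∞) f) :
    pd i (fun y => pd j f y) x = pd j (fun y => pd i f y) x := by
  have hd : ∀ y, HasFDerivAt f (fderiv ℝ f y) y :=
    fun y => (hf.differentiable (by simp) y).hasFDerivAt
  have hd2 : HasFDerivAt (fderiv ℝ f) (fderiv ℝ (fderiv ℝ f) x) x :=
    (((hf.fderiv_right (m := (⊤ : ℕ∞)) (by simp)).differentiable (by simp)) x).hasFDerivAt
  have hsymm := second_derivative_symmetric hd hd2 (Pi.single i 1) (Pi.single j 1)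
  have key : ∀ (k l : Fin 3), pd k (fun y => pd l f y) x
      = fderiv ℝ (fderiv ℝ f) x (Pi.single k 1) (Pi.single l 1) := by
    intro k l
    unfold pd
    rw [fderiv_clm_apply (((hf.fderiv_right (m := (⊤ : ℕ∞)) (by simp)).differentiable (by simp)) x)
      (differentiableAt_const _)]
    simp
  rw [key, key, hsymm]

@[fun_prop]
lemma contDiff_affine (a : Fin 3 → ℝ) (ca : ℝ) :
    ContDiff ℝ (⊤ : ℕ∞) (fun y : Fin 3 → ℝ => a ⬝ᵥ y + ca) := by
  simp only [dotProduct, Fin.sum_univ_three]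
  fun_prop

lemma pd_affine (a : Fin 3 → ℝ) (ca : ℝ) (i : Fin 3) (x : Fin 3 → ℝ) :
    pd i (fun y => a ⬝ᵥ y + ca) x = a i := by
  simp only [dotProduct, Fin.sum_univ_three]
  simp (disch := fun_prop) only [pd_add, pd_mul, pd_const, pd_coord]
  fin_cases i <;> simp

lemma countable_isolated {s : Set ℝ} (h : ∀ t ∈ s, ∀ᶠ y in nhdsWithin t {t}ᶜ, y ∉ s) :
    s.Countable := by
  have hd : DiscreteTopology s := by
    rw [discreteTopology_subtype_iff]
    intro t ht
    have h1 : {y | y ∉ s} ∈ nhdsWithin t {t}ᶜ ⊓ Filter.principal s :=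
      Filter.mem_inf_of_left (h t ht)
    have h2 : s ∈ nhdsWithin t {t}ᶜ ⊓ Filter.principal s :=
      Filter.mem_inf_of_right (Filter.mem_principal_self s)
    have h3 : (∅ : Set ℝ) ∈ nhdsWithin t {t}ᶜ ⊓ Filter.principal s := by
      have := Filter.inter_mem h1 h2
      convert this using 1
      ext y; simp only [Set.mem_empty_iff_false, Set.mem_inter_iff, Set.mem_setOf_eq, false_iff]
      rintro ⟨hy1, hy2⟩; exact hy1 hy2
    exact Filter.empty_mem_iff_bot.mp h3
  have : Countable s := TopologicalSpace.separableSpace_iff_countable.mp inferInstance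
  exact Set.countable_coe_iff.mp this

lemma null_level_grad_ne (v : (Fin 3 → ℝ) → ℝ) (hv : ContDiff ℝ (⊤ : ℕ∞) v) (i : Fin 3) :
    volume {x | v x = 0 ∧ pd i v x ≠ 0} = 0 := by
  classical
  set S := {x | v x = 0 ∧ pd i v x ≠ 0} with hS
  have hvc : Continuous v := hv.continuous
  have hpdc : Continuous (fun y => pd i v y) := continuous_pd i hv
  have hSm : MeasurableSet S := by
    have h1 : MeasurableSet {x | v x = 0} := (isClosed_eq hvc continuous_const).measurableSet
    have h2 : MeasurableSet {x | pd i v x ≠ 0} :=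
      ((isClosed_eq hpdc continuous_const).measurableSet).compl
    exact h1.inter h2
  let m : (Fin 2 → ℝ) × ℝ → (Fin 3 → ℝ) := fun p => i.insertNth p.2 p.1
  have hmp : MeasurePreserving m volume volume := by
    have h1 := (MeasureTheory.volume_preserving_piFinSuccAbove (fun _ : Fin 3 => ℝ) i).symm
    have h2 : MeasurePreserving (Prod.swap : (Fin 2 → ℝ) × ℝ → ℝ × (Fin 2 → ℝ)) volume volume :=
      MeasureTheory.Measure.measurePreserving_swap
    exact h1.comp h2
  have him : volume (m ⁻¹' S) = volume S := hmp.measure_preimage hSm.nullMeasurableSet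
  rw [← him]
  have hTm : MeasurableSet (m ⁻¹' S) := hSm.preimage hmp.measurable
  rw [show (volume : Measure ((Fin 2 → ℝ) × ℝ)) = (volume : Measure (Fin 2 → ℝ)).prod volume from
    rfl]
  rw [MeasureTheory.Measure.measure_prod_null hTm]
  refine Filter.Eventually.of_forall (fun y => ?_)
  show volume (Prod.mk y ⁻¹' (m ⁻¹' S)) = 0
  have hslice : (Prod.mk y ⁻¹' (m ⁻¹' S)) = {t : ℝ | v (i.insertNth t y) = 0 ∧
      pd i v (i.insertNth t y) ≠ 0} := rfl
  rw [hslice]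
  have hins : ∀ t : ℝ, HasDerivAt (fun t => v (i.insertNth t y)) (pd i v (i.insertNth t y)) t := by
    intro t
    have h1 : HasDerivAt (fun t : ℝ => (i.insertNth t y : Fin 3 → ℝ)) (Pi.single i 1) t := by
      have heq : (fun t : ℝ => (i.insertNth t y : Fin 3 → ℝ))
          = fun t : ℝ => (i.insertNth (0:ℝ) y : Fin 3 → ℝ) + t • (Pi.single i 1 : Fin 3 → ℝ) := by
        funext t; funext j
        refine Fin.succAboveCases i ?_ ?_ j
        · simp
        · intro k; simp [Fin.insertNth_apply_succAbove, Pi.single_eq_of_ne (Fin.succAbove_ne i k)]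
      rw [heq]
      simpa using (((hasDerivAt_id t).smul_const ((Pi.single i 1 : Fin 3 → ℝ))).const_add
        ((i.insertNth (0:ℝ) y : Fin 3 → ℝ)))
    have h2 : HasFDerivAt v (fderiv ℝ v (i.insertNth t y)) (i.insertNth t y) :=
      (hv.differentiable (by simp) _).hasFDerivAt
    simpa [pd, Function.comp_def] using h2.comp_hasDerivAt t h1
  refine Set.Countable.measure_zero ?_ _
  refine countable_isolated ?_
  rintro t ⟨ht0, htd⟩
  have hslope := hasDerivAt_iff_tendsto_slope.mp (hins t)
  have hne := hslope.eventually_ne htd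
  filter_upwards [hne, self_mem_nhdsWithin] with s hs hst
  rintro ⟨hs0, -⟩
  apply hs
  simp [slope, hs0, ht0]

/-- The compactly supported vector field whose divergence is the helicity-difference
integrand. -/
noncomputable def Ffield (φ ψ : (Fin 3 → ℝ) → ℝ) (a b : Fin 3 → ℝ) (ca cb : ℝ) :
    Fin 3 → (Fin 3 → ℝ) → ℝ := fun i y =>
  (a ⬝ᵥ y + ca) * (2 * (ψ y - (b ⬝ᵥ y + cb)) * (crossProduct a b) i
    - (φ y - (a ⬝ᵥ y + ca)) * (crossProduct (grad3 ψ y) b) i)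

set_option maxHeartbeats 2000000 in
lemma div_identity (φ ψ : (Fin 3 → ℝ) → ℝ) (hφ : ContDiff ℝ (⊤ : ℕ∞) φ) (hψ : ContDiff ℝ (⊤ : ℕ∞) ψ)
    (a b : Fin 3 → ℝ) (ca cb : ℝ) (x : Fin 3 → ℝ) :
    (φ x • grad3 ψ x - (a ⬝ᵥ x + ca) • b) ⬝ᵥ
      (crossProduct (grad3 φ x) (grad3 ψ x) + crossProduct a b)
    = ∑ i, pd i (Ffield φ ψ a b ca cb i) x := by
  unfold Ffield
  rw [Fin.sum_univ_three]
  simp only [cross_apply, dotProduct, Fin.sum_univ_three, grad3, Pi.sub_apply, Pi.add_apply,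
    Pi.smul_apply, smul_eq_mul, Matrix.cons_val_zero, Matrix.cons_val_one, Matrix.head_cons,
    Matrix.cons_val_two, Matrix.tail_cons]
  simp (disch := fun_prop) only [pd_mul, pd_sub, pd_add, pd_const, pd_coord]
  have e1 : pd 1 (pd 0 ψ) x = pd 0 (pd 1 ψ) x := pd_comm hψ
  have e2 : pd 2 (pd 0 ψ) x = pd 0 (pd 2 ψ) x := pd_comm hψ
  have e3 : pd 2 (pd 1 ψ) x = pd 1 (pd 2 ψ) x := pd_comm hψ
  rw [e1, e2, e3]
  simp only [Fin.reduceEq, reduceIte, if_true]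
  ring

lemma smul_dot_cross (c : ℝ) (g h : Fin 3 → ℝ) :
    (c • h) ⬝ᵥ (crossProduct g h) = 0 := by
  simp only [cross_apply, dotProduct, Fin.sum_univ_three, Pi.smul_apply, smul_eq_mul,
    Matrix.cons_val_zero, Matrix.cons_val_one, Matrix.head_cons, Matrix.cons_val_two,
    Matrix.tail_cons]
  ring

end Aux

set_option maxHeartbeats 4000000 in
theorem clebsch_perturbation_preserves_helicity
    (Ω : Set (Fin 3 → ℝ)) (hΩopen : IsOpen Ω) (hΩ : Ω ⊆ unitBox)
    (φ ψ φb ψb : (Fin 3 → ℝ) → ℝ)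
    (hφ : ContDiff ℝ (⊤ : ℕ∞) φ) (hψ : ContDiff ℝ (⊤ : ℕ∞) ψ)
    (haffφ : ∃ (a : Fin 3 → ℝ) (c : ℝ), ∀ x, φb x = a ⬝ᵥ x + c)
    (haffψ : ∃ (a : Fin 3 → ℝ) (c : ℝ), ∀ x, ψb x = a ⬝ᵥ x + c)
    (hsupp : Function.support (fun x => (φ x - φb x, ψ x - ψb x)) ⊆ Ω)
    (A Ab B Bb : (Fin 3 → ℝ) → (Fin 3 → ℝ))
    (hB : ∀ x, B x = crossProduct (grad3 φ x) (grad3 ψ x))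
    (hBb : ∀ x, Bb x = crossProduct (grad3 φb x) (grad3 ψb x))
    (hA : ∀ x, A x = φ x • grad3 ψ x)
    (hAb : ∀ x, Ab x = φb x • grad3 ψb x) :
    (∫ x in unitBox, (A x ⬝ᵥ B x - Ab x ⬝ᵥ Bb x))
      = ∫ x in Ω, (φ x • grad3 ψ x - φb x • grad3 ψb x) ⬝ᵥ (B x + Bb x) ∧
    (∫ x in Ω, (φ x • grad3 ψ x - φb x • grad3 ψb x) ⬝ᵥ (B x + Bb x)) = 0 := by
  classical
  obtain ⟨a, ca, ha⟩ := haffφ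
  obtain ⟨b, cb, hb⟩ := haffψ
  have hφbf : φb = fun y => a ⬝ᵥ y + ca := funext ha
  have hψbf : ψb = fun y => b ⬝ᵥ y + cb := funext hb
  -- gradients of the affine functions
  have hgradφb : ∀ x, grad3 φb x = a := by
    intro x; funext i; rw [hφbf]; exact pd_affine a ca i x
  have hgradψb : ∀ x, grad3 ψb x = b := by
    intro x; funext i; rw [hψbf]; exact pd_affine b cb i x
  -- the concrete integrand
  set J : (Fin 3 → ℝ) → ℝ := fun x => (φ x • grad3 ψ x - (a ⬝ᵥ x + ca) • b) ⬝ᵥ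
      (crossProduct (grad3 φ x) (grad3 ψ x) + crossProduct a b) with hJdef
  have hJx : ∀ x, (φ x • grad3 ψ x - φb x • grad3 ψb x) ⬝ᵥ (B x + Bb x) = J x := by
    intro x
    rw [hJdef, hB x, hBb x, hgradφb x, hgradψb x, ha x]
  -- support facts
  have hsupp0 : ∀ z, z ∉ Ω → (φ z - (a ⬝ᵥ z + ca) = 0 ∧ ψ z - (b ⬝ᵥ z + cb) = 0) := by
    intro z hz
    have h0 : (fun x => (φ x - φb x, ψ x - ψb x)) z = 0 :=
      Function.notMem_support.mp (fun h => hz (hsupp h))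
    have h1 := congrArg Prod.fst h0
    have h2 := congrArg Prod.snd h0
    simp only [Prod.fst_zero, Prod.snd_zero] at h1 h2
    rw [ha z] at h1; rw [hb z] at h2
    exact ⟨h1, h2⟩
  -- the field and its basic properties
  set F : Fin 3 → (Fin 3 → ℝ) → ℝ := Ffield φ ψ a b ca cb with hFdef
  have hFsm : ∀ i, ContDiff ℝ (⊤ : ℕ∞) (F i) := by
    intro i
    rw [hFdef]
    fin_cases i <;>
    · unfold Ffield
      simp [cross_apply, grad3, dotProduct, Fin.sum_univ_three]
      fun_prop
  have hF0 : ∀ z, z ∉ Ω → ∀ i, F i z = 0 := by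
    intro z hz i
    obtain ⟨h1, h2⟩ := hsupp0 z hz
    rw [hFdef]
    unfold Ffield
    rw [h1, h2]
    ring
  -- points on faces are outside Ω
  have hface : ∀ (i : Fin 3) (t : ℝ), (t = 0 ∨ t = 1) → ∀ y : Fin 2 → ℝ,
      (i.insertNth t y : Fin 3 → ℝ) ∉ Ω := by
    intro i t ht y hmem
    have hub := hΩ hmem
    have : (i.insertNth t y : Fin 3 → ℝ) i ∈ Set.Ioo (0:ℝ) 1 := hub i (Set.mem_univ i)
    rw [Fin.insertNth_apply_same] at this
    rcases ht with rfl | rfl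
    · exact lt_irrefl _ this.1
    · exact lt_irrefl _ this.2
  -- divergence theorem
  have hle : (fun _ : Fin 3 => (0:ℝ)) ≤ fun _ => 1 := fun _ => zero_le_one
  have hdiv := MeasureTheory.integral_divergence_of_hasFDerivAt_off_countable'
      (n := 2) (fun _ => (0:ℝ)) (fun _ => (1:ℝ)) hle F
      (fun i x => fderiv ℝ (F i) x) ∅ Set.countable_empty
      (fun i => (hFsm i).continuous.continuousOn)
      (fun x _ i => ((hFsm i).differentiable (by simp) x).hasFDerivAt)
      (by
        refine (continuous_finset_sum _ (fun i _ => ?_)).continuousOn.integrableOn_Icc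
        exact continuous_pd i (hFsm i))
  have hfaces0 : ∑ i : Fin 3,
      ((∫ x in Set.Icc ((fun _ : Fin 3 => (0:ℝ)) ∘ i.succAbove)
          ((fun _ : Fin 3 => (1:ℝ)) ∘ i.succAbove), F i (i.insertNth ((fun _ : Fin 3 => (1:ℝ)) i) x)) -
        ∫ x in Set.Icc ((fun _ : Fin 3 => (0:ℝ)) ∘ i.succAbove)
          ((fun _ : Fin 3 => (1:ℝ)) ∘ i.succAbove), F i (i.insertNth ((fun _ : Fin 3 => (0:ℝ)) i) x))
      = 0 := by
    refine Finset.sum_eq_zero fun i _ => ?_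
    have hz1 : ∀ y : Fin 2 → ℝ, F i (i.insertNth ((fun _ : Fin 3 => (1:ℝ)) i) y) = 0 :=
      fun y => hF0 _ (hface i 1 (Or.inr rfl) y) i
    have hz0 : ∀ y : Fin 2 → ℝ, F i (i.insertNth ((fun _ : Fin 3 => (0:ℝ)) i) y) = 0 :=
      fun y => hF0 _ (hface i 0 (Or.inl rfl) y) i
    simp only [hz1, hz0, integral_zero, sub_zero]
  have hdiv0 : (∫ x in Set.Icc (fun _ : Fin 3 => (0:ℝ)) (fun _ => (1:ℝ)),
      ∑ i, fderiv ℝ (F i) x (Pi.single i 1)) = 0 := by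
    rw [hdiv]; exact hfaces0
  -- from Icc to unitBox
  have hIccBox : (∫ x in unitBox, ∑ i, pd i (F i) x)
      = ∫ x in Set.Icc (fun _ : Fin 3 => (0:ℝ)) (fun _ => (1:ℝ)), ∑ i, pd i (F i) x := by
    refine setIntegral_congr_set ?_
    rw [show (volume : Measure (Fin 3 → ℝ)) = Measure.pi (fun _ => volume) from volume_pi]
    exact Measure.univ_pi_Ioo_ae_eq_Icc (f := fun _ => (0:ℝ)) (g := fun _ => (1:ℝ))
  have hBox0 : (∫ x in unitBox, ∑ i, pd i (F i) x) = 0 := by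
    rw [hIccBox]
    exact hdiv0
  -- pointwise identity
  have hJF : ∀ x, J x = ∑ i, pd i (F i) x := by
    intro x
    rw [hJdef, hFdef]
    exact div_identity φ ψ hφ hψ a b ca cb x
  have hJBox : (∫ x in unitBox, J x) = 0 := by
    rw [show (fun x => J x) = fun x => ∑ i, pd i (F i) x from funext hJF]
    exact hBox0
  -- continuity and integrability of J
  have hφc : Continuous φ := hφ.continuous
  have hψc : Continuous ψ := hψ.continuous
  have hJc : Continuous J := by
    rw [hJdef]
    simp only [cross_apply, dotProduct, Fin.sum_univ_three, grad3, Pi.sub_apply, Pi.add_apply,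
      Pi.smul_apply, smul_eq_mul, Matrix.cons_val_zero, Matrix.cons_val_one, Matrix.head_cons,
      Matrix.cons_val_two, Matrix.tail_cons]
    fun_prop
  have hubIcc : unitBox ⊆ Set.Icc (fun _ : Fin 3 => (0:ℝ)) (fun _ => 1) := by
    rw [← Set.pi_univ_Icc]
    exact Set.pi_mono fun i _ => Set.Ioo_subset_Icc_self
  have hJint : IntegrableOn J (Set.Icc (fun _ : Fin 3 => (0:ℝ)) (fun _ => 1)) :=
    hJc.continuousOn.integrableOn_Icc
  have hmeasBox : MeasurableSet unitBox := MeasurableSet.univ_pi fun i => measurableSet_Ioo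
  have hmeasDiff : MeasurableSet (unitBox \ Ω) := hmeasBox.diff hΩopen.measurableSet
  -- the null set where the gradient of v does not vanish on the level set
  set v : (Fin 3 → ℝ) → ℝ := fun y => ψ y - (b ⬝ᵥ y + cb) with hvdef
  have hvsm : ContDiff ℝ (⊤ : ℕ∞) v := hψ.sub (contDiff_affine b cb)
  set N : Set (Fin 3 → ℝ) := ⋃ i : Fin 3, {x | v x = 0 ∧ pd i v x ≠ 0} with hNdef
  have hN : volume N = 0 := measure_iUnion_null fun i => null_level_grad_ne v hvsm i
  -- J vanishes a.e. outside Ω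
  have hJzero : ∀ x, x ∉ Ω → x ∉ N → J x = 0 := by
    intro x hxΩ hxN
    obtain ⟨h1, h2⟩ := hsupp0 x hxΩ
    have hpdv : ∀ i, pd i v x = 0 := by
      intro i
      by_contra hne
      exact hxN (Set.mem_iUnion.mpr ⟨i, h2, hne⟩)
    have hgψ : grad3 ψ x = b := by
      funext i
      have := hpdv i
      rw [hvdef] at this
      rw [pd_sub hψ (contDiff_affine b cb), pd_affine b cb i x] at this
      have : pd i ψ x = b i := by linarith
      simpa [grad3] using this
    have hφx : φ x = a ⬝ᵥ x + ca := by linarith [h1]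
    rw [hJdef]
    simp [hφx, hgψ, sub_self]
  have hdiffzero : (∫ x in unitBox \ Ω, J x) = 0 := by
    refine integral_eq_zero_of_ae ?_
    have h1 : ∀ᵐ x ∂(volume.restrict (unitBox \ Ω)), x ∉ N :=
      ae_restrict_of_ae ((measure_eq_zero_iff_ae_notMem).mp hN)
    have h2 : ∀ᵐ x ∂(volume.restrict (unitBox \ Ω)), x ∈ unitBox \ Ω :=
      ae_restrict_mem hmeasDiff
    filter_upwards [h1, h2] with x hxN hxmem
    exact hJzero x hxmem.2 hxN
  have hsplit : (∫ x in unitBox, J x) = (∫ x in Ω, J x) + ∫ x in unitBox \ Ω, J x := by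
    rw [← setIntegral_union disjoint_sdiff_self_right hmeasDiff
      (hJint.mono_set (subset_trans hΩ hubIcc)) (hJint.mono_set (subset_trans
        Set.diff_subset hubIcc)), Set.union_diff_cancel hΩ]
  have key : (∫ x in Ω, J x) = 0 := by
    have := hJBox
    rw [hsplit, hdiffzero, add_zero] at this
    exact this
  have keyΩ : (∫ x in Ω, (φ x • grad3 ψ x - φb x • grad3 ψb x) ⬝ᵥ (B x + Bb x)) = 0 := by
    rw [show (fun x => (φ x • grad3 ψ x - φb x • grad3 ψb x) ⬝ᵥ (B x + Bb x)) = J from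
      funext hJx]
    exact key
  refine ⟨?_, keyΩ⟩
  rw [keyΩ]
  have hpt : (fun x => A x ⬝ᵥ B x - Ab x ⬝ᵥ Bb x) = fun _ => (0:ℝ) := by
    funext x
    rw [hA x, hB x, hAb x, hBb x, smul_dot_cross, smul_dot_cross]
    ring
  rw [show (∫ x in unitBox, (A x ⬝ᵥ B x - Ab x ⬝ᵥ Bb x)) = ∫ _ in unitBox, (0:ℝ) from by
    rw [hpt], integral_zero]
end
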